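/- The infinite word 001001·t̄ is overlap-free, and it is the lexicographically least infinite binary overlap-free word: for every infinite binary overlap-free word x, either x = 001001·t̄ or 001001·t̄ precedes x in the lexicographic order on infinite binary words (with 0 < 1). -/

import Mathlib

/-- An overlap: a word of the form a x a x a, with `a` a single letter. -/
def Overlap (w : List (Fin 2)) : Prop :=
  ∃ (a : Fin 2) (x : List (Fin 2)), w = [a] ++ x ++ [a] ++ x ++ [a]

/-- `w` occurs as a (contiguous) factor of the infinite word `x`. -/
def FactorOf (w : List (Fin 2)) (x : ℕ → Fin 2) : Prop :=
  ∃ i, w = (List.range w.length).map (fun j => x (i + j))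

/-- An infinite binary word is overlap-free if no finite factor is an overlap. -/
def OverlapFree (x : ℕ → Fin 2) : Prop :=
  ∀ w, FactorOf w x → ¬ Overlap w

/-- The Thue–Morse morphism applied to an infinite word. -/
def mu (x : ℕ → Fin 2) : ℕ → Fin 2 :=
  fun n => if n % 2 = 0 then x (n / 2) else 1 - x (n / 2)

/-- Prepend a finite word to an infinite word. -/
def prepend (p : List (Fin 2)) (w : ℕ → Fin 2) : ℕ → Fin 2 :=
  fun n => if h : n < p.length then p.get ⟨n, h⟩ else w (n - p.length)

/-- `x` begins with the finite word `p`. -/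
def BeginsWith (x : ℕ → Fin 2) (p : List (Fin 2)) : Prop :=
  ∀ i < p.length, x i = p.getD i 0

/-- The Thue--Morse word: the parity of the number of 1s in the binary expansion. -/
def thueMorse : ℕ → Fin 2 := fun n => Fin.ofNat 2 ((Nat.digits 2 n).count 1)

/-- Lexicographic order (with 0 < 1) on infinite binary words. -/
def LexLt (u v : ℕ → Fin 2) : Prop :=
  ∃ n, (∀ i < n, u i = v i) ∧ u n = 0 ∧ v n = 1

/-!
`t̄` is a fixed point of `μ`. In a `μ`-image, squares `aa` of letters start only at odd positions,
so an overlap of odd period would have to alternate across a window of odd length, which its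
periodicity forbids; an overlap of period `2q` comes from one of period `q` in the preimage. Hence
`t̄` is overlap-free. An overlap of `001001 t̄` starting inside the prefix is either short, and
excluded by inspecting the first 36 letters, or makes a long prefix of `t̄` periodic, which the same
halving argument rules out.

For minimality: in an overlap-free word, all squares `aa` at positions `≥ 1` start at positions of
the same parity. So an overlap-free word that agrees with `001001 t̄ = 00 μ(μ(1 μ(t̄)))` on a short
prefix is, after the prefix, the `μ`-image of an overlap-free word, and a first difference in its
favour descends to that word at half the position. Along the chain
`001001 t̄, 10 t̄, 1 t̄, t̄, t̄, …` the position of the first difference becomes small, and a word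
that drops below the chain word that early contains an overlap within two more letters.
-/

lemma fin_two_eq_one_sub_of_ne {a b : Fin 2} (h : a ≠ b) : b = 1 - a := by
  revert a b; decide

lemma fin_two_eq_of_ne_of_ne {a b c : Fin 2} (hab : a ≠ b) (hbc : b ≠ c) : a = c := by
  revert a b c; decide

section Prepend

variable (p : List (Fin 2)) (w : ℕ → Fin 2)

@[simp] lemma prepend_nil : prepend [] w = w := by
  funext n; simp [prepend]

lemma prepend_of_le {n : ℕ} (h : p.length ≤ n) : prepend p w n = w (n - p.length) := by
  simp [prepend, Nat.not_lt.mpr h]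

@[simp] lemma prepend_length_add (n : ℕ) : prepend p w (p.length + n) = w n := by
  simp [prepend_of_le]

lemma prepend_append (q : List (Fin 2)) : prepend p (prepend q w) = prepend (p ++ q) w := by
  funext n
  simp only [prepend, List.get_eq_getElem, List.length_append]
  split_ifs with h₁ h₂ <;> try omega
  · exact (List.getElem_append_left h₁).symm
  · exact (List.getElem_append_right (Nat.not_lt.mp h₁)).symm
  · rw [Nat.sub_sub]

end Prepend

@[simp] lemma mu_two_mul (x : ℕ → Fin 2) (k : ℕ) : mu x (2 * k) = x k := by
  simp [mu]

@[simp] lemma mu_two_mul_add_one (x : ℕ → Fin 2) (k : ℕ) : mu x (2 * k + 1) = 1 - x k := by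
  simp [mu, Nat.add_mod, Nat.add_div]

lemma mu_prepend_cons (a : Fin 2) (p : List (Fin 2)) (w : ℕ → Fin 2) :
    mu (prepend (a :: p) w) = prepend [a, 1 - a] (mu (prepend p w)) := by
  funext n
  rcases Nat.even_or_odd' n with ⟨k, rfl | rfl⟩ <;> rcases k with _ | k
  all_goals simp [prepend, mu, Nat.mul_add, Nat.add_mod, Nat.add_div]

lemma thueMorse_two_mul (n : ℕ) : thueMorse (2 * n) = thueMorse n := by
  rcases Nat.eq_zero_or_pos n with rfl | hn
  · rfl
  · simp [thueMorse, Nat.digits_def' one_lt_two (by omega : 0 < 2 * n)]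

lemma thueMorse_two_mul_add_one (n : ℕ) : thueMorse (2 * n + 1) = thueMorse n + 1 := by
  simp only [thueMorse, Nat.digits_def' one_lt_two (by omega : 0 < 2 * n + 1)]
  rw [show (2 * n + 1) % 2 = 1 by omega, show (2 * n + 1) / 2 = n by omega, List.count_cons]
  simp [Fin.ext_iff, Fin.val_add]

def thueMorseCompl : ℕ → Fin 2 := fun n => 1 - thueMorse n

lemma mu_thueMorseCompl : mu thueMorseCompl = thueMorseCompl := by
  funext n
  rcases Nat.even_or_odd' n with ⟨k, rfl | rfl⟩
  · simp [thueMorseCompl, thueMorse_two_mul]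
  · simp only [mu_two_mul_add_one, thueMorseCompl, thueMorse_two_mul_add_one]
    generalize thueMorse k = a
    revert a; decide

/-- `x` has an overlap of period `p` starting at position `i`: the factor
`x i ⋯ x (i + 2p)` is `a y a y a` with `|a y| = p`. -/
def HasOverlapAt (x : ℕ → Fin 2) (i p : ℕ) : Prop :=
  0 < p ∧ ∀ j ≤ p, x (i + j) = x (i + j + p)

instance (x : ℕ → Fin 2) (i p : ℕ) : Decidable (HasOverlapAt x i p) := by
  unfold HasOverlapAt; infer_instance

lemma not_overlapFree_of_hasOverlapAt {x : ℕ → Fin 2} {i p : ℕ} (h : HasOverlapAt x i p) :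
    ¬ OverlapFree x := by
  obtain ⟨hp, hper⟩ := h
  obtain ⟨q, rfl⟩ : ∃ q, p = q + 1 := ⟨p - 1, by omega⟩
  intro hx
  refine hx ((List.range (1 + q + 1 + q + 1)).map fun j => x (i + j)) ⟨i, by simp⟩
    ⟨x i, (List.range q).map fun j => x (i + 1 + j), ?_⟩
  have hfirst : x (i + 1 + q) = x i := by convert (hper 0 (by omega)).symm using 2 <;> omega
  have hlast : x (i + (1 + q + 1 + q)) = x i := by
    rw [← hfirst]; convert (hper (1 + q) (by omega)).symm using 2 <;> omega
  have hmid : ∀ j ∈ List.range q, x (i + (1 + q + 1 + j)) = x (i + 1 + j) := fun j hj => by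
    have := List.mem_range.mp hj
    convert (hper (1 + j) (by omega)).symm using 2 <;> omega
  simp only [List.range_add, List.map_append, List.map_map, List.range_one, List.map_cons,
    List.map_nil, List.append_assoc, List.cons_append, List.nil_append, Function.comp_def,
    add_zero, ← add_assoc i 1, hfirst, hlast, List.map_congr_left hmid]

lemma hasOverlapAt_of_overlap {x : ℕ → Fin 2} {w : List (Fin 2)} (hw : FactorOf w x)
    (ho : Overlap w) : ∃ i p, HasOverlapAt x i p := by
  obtain ⟨i, hi⟩ := hw
  have hx : ∀ j < w.length, x (i + j) = w.getD j 0 := fun j hj => by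
    rw [hi]; simp [hj]
  obtain ⟨a, X, rfl⟩ := ho
  have hl : [a] ++ X ++ [a] ++ X ++ [a] = (a :: X ++ [a]) ++ (X ++ [a]) := by simp
  have hr : [a] ++ X ++ [a] ++ X ++ [a] = (a :: X) ++ (a :: X ++ [a]) := by simp
  refine ⟨i, X.length + 1, by omega, fun j hj => ?_⟩
  rw [hx j (by simp; omega), add_assoc, hx (j + (X.length + 1)) (by simp; omega)]
  conv_lhs => rw [hl, List.getD_append _ _ _ _ (by simp; omega)]
  conv_rhs => rw [hr, List.getD_append_right _ _ _ _ (by simp)]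
  simp

theorem overlapFree_iff {x : ℕ → Fin 2} : OverlapFree x ↔ ∀ i p, ¬ HasOverlapAt x i p :=
  ⟨fun hx _ _ h => not_overlapFree_of_hasOverlapAt h hx, fun h _ hw ho =>
    let ⟨i, p, hip⟩ := hasOverlapAt_of_overlap hw ho; h i p hip⟩

lemma OverlapFree.not_hasOverlapAt {x : ℕ → Fin 2} (hx : OverlapFree x) {i p : ℕ} :
    ¬ HasOverlapAt x i p :=
  overlapFree_iff.1 hx i p

lemma BeginsWith.hasOverlapAt_iff {x : ℕ → Fin 2} {w : List (Fin 2)} (hw : BeginsWith x w)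
    {i p : ℕ} (h : i + 2 * p < w.length) :
    HasOverlapAt x i p ↔ HasOverlapAt (fun n => w.getD n 0) i p := by
  unfold HasOverlapAt
  refine and_congr_right fun _ => forall₂_congr fun j hj => ?_
  rw [hw _ (by omega), hw _ (by omega)]

def ListHasOverlap (w : List (Fin 2)) : Prop :=
  ∃ i < w.length, ∃ p < w.length, i + 2 * p < w.length ∧ HasOverlapAt (fun n => w.getD n 0) i p

instance (w : List (Fin 2)) : Decidable (ListHasOverlap w) := by
  unfold ListHasOverlap; infer_instance

lemma BeginsWith.listHasOverlap {x : ℕ → Fin 2} {w : List (Fin 2)} (hw : BeginsWith x w)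
    {i p : ℕ} (h : i + 2 * p < w.length) (ho : HasOverlapAt x i p) : ListHasOverlap w :=
  ⟨i, by omega, p, by omega, h, (hw.hasOverlapAt_iff h).1 ho⟩

lemma BeginsWith.not_overlapFree {x : ℕ → Fin 2} {w : List (Fin 2)} (hw : BeginsWith x w)
    (ho : ListHasOverlap w) : ¬ OverlapFree x := by
  obtain ⟨i, -, p, -, h, hip⟩ := ho
  exact not_overlapFree_of_hasOverlapAt ((hw.hasOverlapAt_iff h).2 hip)

lemma ne_of_alternating {x : ℕ → Fin 2} {i p : ℕ} (h : ∀ j < p, x (i + j + 1) ≠ x (i + j))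
    (hp : Odd p) : x (i + p) ≠ x i := by
  obtain ⟨k, rfl⟩ := hp
  induction k with
  | zero => simpa using h 0 (by omega)
  | succ k ih =>
    have h2 := fin_two_eq_of_ne_of_ne (h (2 * k + 2) (by omega)) (h (2 * k + 1) (by omega))
    rw [show i + (2 * (k + 1) + 1) = i + (2 * k + 2) + 1 by ring, h2]
    exact ih fun j hj => h j (by omega)

lemma mu_add_one_ne_of_even (y : ℕ → Fin 2) {m : ℕ} (hm : Even m) : mu y (m + 1) ≠ mu y m := by
  obtain ⟨k, rfl⟩ := hm
  rw [← two_mul, mu_two_mul, mu_two_mul_add_one]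
  generalize y k = a
  revert a; decide

lemma hasOverlapAt_mu {y : ℕ → Fin 2} {i p : ℕ} (h : HasOverlapAt (mu y) i p) :
    HasOverlapAt y (i / 2) (p / 2) := by
  obtain ⟨hp, hper⟩ := h
  rcases Nat.even_or_odd p with ⟨q, rfl⟩ | hodd
  · refine ⟨by omega, fun r hr => ?_⟩
    have h := hper (2 * r) (by omega)
    rw [show i + 2 * r + (q + q) = i + 2 * (r + q) by ring] at h
    unfold mu at h
    simp only [Nat.add_mul_mod_self_left, Nat.add_mul_div_left _ _ two_pos] at h
    rw [show (q + q) / 2 = q by omega, add_assoc]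
    split_ifs at h
    exacts [h, sub_right_injective h]
  · exfalso
    have hne : ∀ j < p, mu y (i + j + 1) ≠ mu y (i + j) := by
      intro j hj hpair
      have hpair' : mu y (i + j + p + 1) = mu y (i + j + p) := by
        rw [← hper j (by omega), show i + j + p + 1 = i + (j + 1) + p by omega,
          ← hper (j + 1) (by omega), ← add_assoc, hpair]
      rcases Nat.even_or_odd (i + j) with he | ho
      · exact mu_add_one_ne_of_even y he hpair
      · exact mu_add_one_ne_of_even y (ho.add_odd hodd) hpair'
    exact ne_of_alternating hne hodd (by simpa using (hper 0 (by omega)).symm)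

theorem overlapFree_thueMorseCompl : OverlapFree thueMorseCompl := by
  rw [overlapFree_iff]
  intro i p
  induction p using Nat.strong_induction_on generalizing i with
  | _ p ih =>
    intro h
    rw [← mu_thueMorseCompl] at h
    exact ih (p / 2) (by have := h.1; omega) _ (hasOverlapAt_mu h)

lemma thueMorseCompl_two_mul (m : ℕ) : thueMorseCompl (2 * m) = thueMorseCompl m := by
  conv_lhs => rw [← mu_thueMorseCompl]
  exact mu_two_mul _ m

lemma thueMorseCompl_not_prefix_period (k p : ℕ) (hp : 3 * k + 1 ≤ p) :
    ¬ ∀ m, m + k < p → thueMorseCompl m = thueMorseCompl (m + p) := by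
  induction p using Nat.strong_induction_on generalizing k with
  | _ p ih =>
    intro h
    rcases Nat.even_or_odd p with ⟨q, rfl⟩ | hodd
    · refine ih q (by omega) (k / 2) (by omega) fun m hm => ?_
      have := h (2 * m) (by omega)
      rwa [show 2 * m + (q + q) = 2 * (m + q) by ring, thueMorseCompl_two_mul,
        thueMorseCompl_two_mul] at this
    · rcases (by have := Nat.odd_iff.mp hodd; omega : p = 1 ∨ 3 ≤ p) with rfl | hp3
      · exact absurd (h 0 (by omega)) (by decide)
      · have hne := mu_add_one_ne_of_even thueMorseCompl (show Even (1 + p) from hodd.one_add)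
        rw [mu_thueMorseCompl, add_right_comm, ← h 1 (by omega), ← h 2 (by omega)] at hne
        exact hne (by decide)

lemma HasOverlapAt.of_prepend {w : List (Fin 2)} {t : ℕ → Fin 2} {i p : ℕ}
    (h : HasOverlapAt (prepend w t) i p) (hi : w.length ≤ i) : HasOverlapAt t (i - w.length) p := by
  refine ⟨h.1, fun j hj => ?_⟩
  have := h.2 j hj
  rw [prepend_of_le _ _ (by omega), prepend_of_le _ _ (by omega)] at this
  convert this using 2 <;> omega

lemma HasOverlapAt.prefix_period_of_prepend {w : List (Fin 2)} {t : ℕ → Fin 2} {i p : ℕ}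
    (h : HasOverlapAt (prepend w t) i p) (hi : i < w.length) :
    ∀ m, m + (w.length - 1 - i) < p → t m = t (m + p) := by
  intro m hm
  have := h.2 (m + w.length - i) (by omega)
  rw [prepend_of_le _ _ (by omega), prepend_of_le _ _ (by omega)] at this
  convert this using 2 <;> omega

theorem overlapFree_prepend_001001 : OverlapFree (prepend [0, 0, 1, 0, 0, 1] thueMorseCompl) := by
  rw [overlapFree_iff]
  intro i p h
  rcases lt_or_ge i 6 with hi | hi
  -- `16 = 3 * 5 + 1`: long overlaps starting at `i < 6` make a prefix of `t̄` periodic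
  · rcases lt_or_ge p 16 with hp | hp
    · have hw : BeginsWith (prepend [0, 0, 1, 0, 0, 1] thueMorseCompl)
          [0, 0, 1, 0, 0, 1, 1, 0, 0, 1, 0, 1, 1, 0, 0, 1, 1, 0, 1, 0, 0, 1, 0, 1, 1, 0, 1, 0, 0, 1,
            1, 0, 0, 1, 0, 1] := by
        unfold BeginsWith; decide
      exact absurd (hw.listHasOverlap (by simp; omega) h) (by decide +kernel)
    · exact thueMorseCompl_not_prefix_period (5 - i) p (by omega) (h.prefix_period_of_prepend hi)
  · exact overlapFree_thueMorseCompl.not_hasOverlapAt (h.of_prepend hi)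

/-- `LexLt u v` unfolds to `∃ n, LexLtAt u v n`. -/
def LexLtAt (u v : ℕ → Fin 2) (n : ℕ) : Prop :=
  (∀ i < n, u i = v i) ∧ u n = 0 ∧ v n = 1

lemma lexLt_or_lexLt_of_ne {u v : ℕ → Fin 2} (h : u ≠ v) : LexLt u v ∨ LexLt v u := by
  classical
  have hex : ∃ n, u n ≠ v n := by
    by_contra! h'
    exact h (funext h')
  have hmin : ∀ i < Nat.find hex, u i = v i := fun i hi => not_not.1 (Nat.find_min hex hi)
  have key : ∀ a b : Fin 2, a ≠ b → (a = 0 ∧ b = 1) ∨ (b = 0 ∧ a = 1) := by decide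
  rcases key _ _ (Nat.find_spec hex) with huv | hvu
  · exact Or.inl ⟨_, hmin, huv⟩
  · exact Or.inr ⟨_, fun i hi => (hmin i hi).symm, hvu⟩

lemma LexLtAt.beginsWith {x y : ℕ → Fin 2} {w : List (Fin 2)} {n : ℕ} (h : LexLtAt x y n)
    (hy : BeginsWith y w) (hn : w.length ≤ n) : BeginsWith x w :=
  fun i hi => (h.1 i (by omega)).trans (hy i hi)

lemma LexLtAt.false_of_forced_overlap {x y : ℕ → Fin 2} {P w : List (Fin 2)} {n : ℕ}
    (h : LexLtAt x y n) (hx : OverlapFree x) (hxP : BeginsWith x P) (hyw : BeginsWith y w)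
    (hn : n < w.length)
    (hw : ∀ m < w.length, w.getD m 0 = 1 →
      (m < P.length ∧ P.getD m 0 = 1) ∨ ∀ a : Fin 2, ListHasOverlap (w.take m ++ [0, a])) :
    False := by
  obtain ⟨hlt, hx0, hy1⟩ := h
  rcases hw n hn ((hyw n hn).symm.trans hy1) with ⟨hnP, hP1⟩ | hov
  · exact absurd ((hxP n hnP).symm.trans hx0) (by rw [hP1]; decide)
  · refine BeginsWith.not_overlapFree (fun i hi => ?_) (hov (x (n + 1))) hx
    simp only [List.length_append, List.length_take, List.length_cons, List.length_nil] at hi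
    rcases lt_or_ge i n with hin | hni
    · rw [List.getD_append _ _ _ _ (by simp; omega), List.getD_eq_getElem?_getD,
        List.getElem?_take_of_lt hin, ← List.getD_eq_getElem?_getD]
      exact (hlt i hin).trans (hyw i (by omega))
    · rw [List.getD_append_right _ _ _ _ (by simp; omega), List.length_take,
        min_eq_left hn.le]
      obtain rfl | rfl := (by omega : i = n ∨ i = n + 1) <;> simp [hx0]

def decimate (c : ℕ) (x : ℕ → Fin 2) : ℕ → Fin 2 := fun k => x (c + 2 * k)

/-- From position `c` on, `x` is the image under `mu` of `decimate c x`. -/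
def IsMuImageFrom (c : ℕ) (x : ℕ → Fin 2) : Prop :=
  ∀ k, x (c + 2 * k + 1) = 1 - x (c + 2 * k)

lemma BeginsWith.decimate {x : ℕ → Fin 2} {w P : List (Fin 2)} {c : ℕ} (h : BeginsWith x w)
    (hP : ∀ k < P.length, c + 2 * k < w.length ∧ P.getD k 0 = w.getD (c + 2 * k) 0) :
    BeginsWith (decimate c x) P :=
  fun k hk => (h _ (hP k hk).1).trans (hP k hk).2.symm

lemma OverlapFree.decimate {x : ℕ → Fin 2} {c : ℕ} (hx : OverlapFree x)
    (hmu : IsMuImageFrom c x) : OverlapFree (decimate c x) := by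
  rw [overlapFree_iff]
  rintro i p ⟨hp, hper⟩
  refine hx.not_hasOverlapAt (i := c + 2 * i) (p := 2 * p) ⟨by omega, fun j hj => ?_⟩
  obtain ⟨r, rfl | rfl⟩ := Nat.even_or_odd' j
  · convert hper r (by omega) using 2 <;> simp only [_root_.decimate] <;> ring_nf
  · rw [show c + 2 * i + (2 * r + 1) = c + 2 * (i + r) + 1 by ring,
      show c + 2 * (i + r) + 1 + 2 * p = c + 2 * (i + r + p) + 1 by ring, hmu, hmu]
    exact congrArg _ (hper r (by omega))

lemma LexLtAt.decimate {x y : ℕ → Fin 2} {p : List (Fin 2)} {n : ℕ}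
    (h : LexLtAt x (prepend p (mu y)) n) (hx : IsMuImageFrom p.length x) (hn : p.length ≤ n) :
    LexLtAt (decimate p.length x) y ((n - p.length) / 2) := by
  obtain ⟨hlt, hx0, hy1⟩ := h
  obtain ⟨k, rfl | rfl⟩ : ∃ k, n = p.length + 2 * k ∨ n = p.length + 2 * k + 1 :=
    ⟨(n - p.length) / 2, by omega⟩
  · refine ⟨fun i hi => ?_, by simpa [_root_.decimate] using hx0, by simpa using hy1⟩
    simpa [_root_.decimate] using hlt (p.length + 2 * i) (by omega)
  · rw [hx k, hlt _ (by omega)] at hx0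
    simp only [add_assoc, prepend_length_add, mu_two_mul, mu_two_mul_add_one] at hx0 hy1
    exact absurd (hx0.symm.trans hy1) (by decide)

lemma OverlapFree.add_two_ne {x : ℕ → Fin 2} (hx : OverlapFree x) {m : ℕ}
    (h : x (m + 1) = x m) : x (m + 2) ≠ x (m + 1) := fun h' =>
  hx.not_hasOverlapAt (i := m) (p := 1) ⟨one_pos, fun j hj => by
    interval_cases j
    exacts [h.symm, h'.symm]⟩

lemma OverlapFree.even_sub_of_consecutive_pairs {x : ℕ → Fin 2} (hx : OverlapFree x) {i j : ℕ}
    (hi : 1 ≤ i) (hij : i < j) (hpi : x (i + 1) = x i) (hpj : x (j + 1) = x j)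
    (hbetween : ∀ k, i < k → k < j → x (k + 1) ≠ x k) : Even (j - i) := by
  by_contra hodd
  obtain ⟨d, hd⟩ := Nat.not_even_iff_odd.1 hodd
  obtain ⟨i, rfl⟩ : ∃ i', i = i' + 1 := ⟨i - 1, by omega⟩
  rcases (by omega : d = 0 ∨ d = 1 ∨ 2 ≤ d) with rfl | rfl | hd2
  · exact hx.add_two_ne hpi (by convert hpj using 2 <;> omega)
  · obtain rfl : j = i + 4 := by omega
    have h0 : x (i + 1) ≠ x i := fun h => hx.add_two_ne h hpi
    have h3 := hbetween (i + 2) (by omega) (by omega)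
    have h4 := hbetween (i + 3) (by omega) (by omega)
    have h6 := hx.add_two_ne hpj
    simp only [add_assoc, Nat.reduceAdd] at *
    have key : ∀ a₀ a₁ a₂ a₃ a₄ a₅ a₆ : Fin 2, a₁ ≠ a₀ → a₂ = a₁ → a₃ ≠ a₂ → a₄ ≠ a₃ → a₅ = a₄ →
        a₆ ≠ a₅ → a₀ = a₃ ∧ a₁ = a₄ ∧ a₂ = a₅ ∧ a₃ = a₆ := by decide
    obtain ⟨e₀, e₁, e₂, e₃⟩ := key _ _ _ _ _ _ _ h0 hpi h3 h4 hpj h6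
    refine hx.not_hasOverlapAt (i := i) (p := 3) ⟨by omega, fun j hj => ?_⟩
    interval_cases j <;> simpa [add_assoc]
  · refine hx.not_hasOverlapAt (i := i + 2) (p := 2) ⟨by omega, fun k hk => ?_⟩
    exact fin_two_eq_of_ne_of_ne (hbetween _ (by omega) (by omega)).symm
      (hbetween _ (by omega) (by omega)).symm

theorem OverlapFree.even_sub_of_pairs {x : ℕ → Fin 2} (hx : OverlapFree x) {i j : ℕ}
    (hi : 1 ≤ i) (hij : i ≤ j) (hpi : x (i + 1) = x i) (hpj : x (j + 1) = x j) :
    Even (j - i) := by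
  obtain ⟨d, hd⟩ : ∃ d, j - i = d := ⟨_, rfl⟩
  induction d using Nat.strong_induction_on generalizing i j with
  | _ d ih =>
    rcases eq_or_lt_of_le hij with rfl | hlt
    · simp
    by_cases hmid : ∃ k, i < k ∧ k < j ∧ x (k + 1) = x k
    · obtain ⟨k, hik, hkj, hpk⟩ := hmid
      have h₁ := ih (k - i) (by omega) hi hik.le hpi hpk rfl
      have h₂ := ih (j - k) (by omega) (by omega) hkj.le hpk hpj rfl
      rw [show j - i = (j - k) + (k - i) by omega]
      exact h₂.add h₁
    · push Not at hmid
      exact hx.even_sub_of_consecutive_pairs hi hlt hpi hpj hmid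

lemma OverlapFree.isMuImageFrom_of_pair {x : ℕ → Fin 2} (hx : OverlapFree x) {i c : ℕ}
    (hi : 1 ≤ i) (hpi : x (i + 1) = x i) (hci : (c + i) % 2 = 1) (h0 : 0 < c ∨ x 1 ≠ x 0) :
    IsMuImageFrom c x := by
  intro k
  refine fin_two_eq_one_sub_of_ne fun hpair => ?_
  rcases Nat.eq_zero_or_pos (c + 2 * k) with h | h
  · obtain ⟨rfl, rfl⟩ : c = 0 ∧ k = 0 := by omega
    exact h0.resolve_left (lt_irrefl 0) hpair.symm
  · rcases le_total i (c + 2 * k) with hle | hle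
    · have := hx.even_sub_of_pairs hi hle hpi hpair.symm
      rw [Nat.even_iff] at this
      omega
    · have := hx.even_sub_of_pairs h hle hpair.symm hpi
      rw [Nat.even_iff] at this
      omega

lemma mu_prepend_one_thueMorseCompl :
    mu (prepend [1] thueMorseCompl) = prepend [1, 0] thueMorseCompl := by
  rw [mu_prepend_cons, prepend_nil, mu_thueMorseCompl]
  rfl

lemma prepend_001001_thueMorseCompl :
    prepend [0, 0, 1, 0, 0, 1] thueMorseCompl =
      prepend [0, 0] (mu (prepend [1, 0] thueMorseCompl)) := by
  rw [mu_prepend_cons, mu_prepend_cons, prepend_nil, mu_thueMorseCompl, prepend_append,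
    prepend_append]
  rfl

theorem not_lexLtAt_thueMorseCompl {x : ℕ → Fin 2} (hx : OverlapFree x)
    (hP : BeginsWith x [1, 0, 0]) (n : ℕ) : ¬ LexLtAt x thueMorseCompl n := by
  induction n using Nat.strong_induction_on generalizing x with
  | _ n ih =>
    intro h
    have hw : BeginsWith thueMorseCompl [1, 0, 0, 1, 0] := by unfold BeginsWith; decide
    by_cases hn : n < 5
    · exact h.false_of_forced_overlap hx hP hw hn (by decide)
    have hxw := h.beginsWith hw (not_lt.mp hn)
    have hmu : IsMuImageFrom 0 x := hx.isMuImageFrom_of_pair (i := 1) le_rfl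
      ((hxw 2 (by decide)).trans (hxw 1 (by decide)).symm) rfl
      (.inr (by rw [hxw 1 (by decide), hxw 0 (by decide)]; decide))
    rw [← mu_thueMorseCompl, ← prepend_nil (mu _)] at h
    exact ih (n / 2) (by omega) (hx.decimate hmu) (hxw.decimate (by decide))
      (h.decimate hmu n.zero_le)

theorem not_lexLtAt_prepend_one {x : ℕ → Fin 2} (hx : OverlapFree x)
    (hP : BeginsWith x [1, 1, 0, 0]) (n : ℕ) : ¬ LexLtAt x (prepend [1] thueMorseCompl) n := by
  intro h
  have hw : BeginsWith (prepend [1] thueMorseCompl) [1, 1, 0, 0, 1, 0] := by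
    unfold BeginsWith; decide
  by_cases hn : n < 6
  · exact h.false_of_forced_overlap hx hP hw hn (by decide)
  have hxw := h.beginsWith hw (not_lt.mp hn)
  have hmu : IsMuImageFrom 1 x := hx.isMuImageFrom_of_pair (i := 2) (by norm_num)
    ((hxw 3 (by decide)).trans (hxw 2 (by decide)).symm) rfl (.inl (by norm_num))
  rw [← mu_thueMorseCompl] at h
  exact not_lexLtAt_thueMorseCompl (hx.decimate hmu) (hxw.decimate (by decide)) _
    (h.decimate hmu (by omega : 1 ≤ n))

theorem not_lexLtAt_prepend_one_zero {x : ℕ → Fin 2} (hx : OverlapFree x)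
    (hP : BeginsWith x [1, 0, 1]) (n : ℕ) : ¬ LexLtAt x (prepend [1, 0] thueMorseCompl) n := by
  intro h
  have hw : BeginsWith (prepend [1, 0] thueMorseCompl) [1, 0, 1, 0, 0, 1, 0] := by
    unfold BeginsWith; decide
  by_cases hn : n < 7
  · exact h.false_of_forced_overlap hx hP hw hn (by decide)
  have hxw := h.beginsWith hw (not_lt.mp hn)
  have hmu : IsMuImageFrom 0 x := hx.isMuImageFrom_of_pair (i := 3) (by norm_num)
    ((hxw 4 (by decide)).trans (hxw 3 (by decide)).symm) rfl
    (.inr (by rw [hxw 1 (by decide), hxw 0 (by decide)]; decide))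
  rw [← mu_prepend_one_thueMorseCompl, ← prepend_nil (mu _)] at h
  exact not_lexLtAt_prepend_one (hx.decimate hmu) (hxw.decimate (by decide)) _
    (h.decimate hmu n.zero_le)

theorem not_lexLt_prepend_001001 {x : ℕ → Fin 2} (hx : OverlapFree x) :
    ¬ LexLt x (prepend [0, 0, 1, 0, 0, 1] thueMorseCompl) := by
  rintro ⟨n, h⟩
  replace h : LexLtAt _ _ n := h
  have hw : BeginsWith (prepend [0, 0, 1, 0, 0, 1] thueMorseCompl) [0, 0, 1, 0, 0, 1, 1] := by
    unfold BeginsWith; decide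
  by_cases hn : n < 7
  · exact h.false_of_forced_overlap hx (P := []) (by simp [BeginsWith]) hw hn (by decide)
  have hxw := h.beginsWith hw (not_lt.mp hn)
  have hmu : IsMuImageFrom 2 x := hx.isMuImageFrom_of_pair (i := 3) (by norm_num)
    ((hxw 4 (by decide)).trans (hxw 3 (by decide)).symm) rfl (.inl (by norm_num))
  rw [prepend_001001_thueMorseCompl] at h
  exact not_lexLtAt_prepend_one_zero (hx.decimate hmu) (hxw.decimate (by decide)) _
    (h.decimate hmu (by omega : 2 ≤ n))

theorem lexicographically_least_overlapFree :
    OverlapFree (prepend [0, 0, 1, 0, 0, 1] (fun n => 1 - thueMorse n)) ∧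
    ∀ x : ℕ → Fin 2, OverlapFree x →
      x = prepend [0, 0, 1, 0, 0, 1] (fun n => 1 - thueMorse n) ∨
      LexLt (prepend [0, 0, 1, 0, 0, 1] (fun n => 1 - thueMorse n)) x := by
  refine ⟨overlapFree_prepend_001001, fun x hx => ?_⟩
  by_cases hxu : x = prepend [0, 0, 1, 0, 0, 1] thueMorseCompl
  · exact Or.inl hxu
  · exact Or.inr ((lexLt_or_lexLt_of_ne hxu).resolve_left (not_lexLt_prepend_001001 hx))
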